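/- Merging two products cannot decrease the expected maximum load: for every T ∈ ℕ, every k ≥ 2, and every vector of positive weights (w_1,…,w_k), one has E_T((w_1 + w_2, w_3,…,w_k)) ≥ E_T((w_1,…,w_k)). -/

import Mathlib

/-!
Merging products along any map `σ` couples the two systems: a customer who picks product `i`
picks `σ i` after the merge. Since merging keeps the total weight, the merged MNL probabilities
are exactly the pushforward of the original ones, so the coupling preserves the law of the choices.
Under it every original load is bounded by a merged load, hence so is the maximum.
-/

open Finset

/-- MNL choice probability for a single customer offered products with weights `w`:
outcome `some i` (select product `i`) has probability `w i / (1 + ∑ j, w j)`, and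
outcome `none` (no purchase) has probability `1 / (1 + ∑ j, w j)`. -/
noncomputable def mnlProb {k : ℕ} (w : Fin k → ℝ) : Option (Fin k) → ℝ
  | none => 1 / (1 + ∑ j, w j)
  | some i => w i / (1 + ∑ j, w j)

/-- The load of product `i`: the number of customers `t` selecting product `i`,
given the outcome `f` of the `T` customers' choices. -/
def loadCount {k T : ℕ} (f : Fin T → Option (Fin k)) (i : Fin k) : ℕ :=
  (Finset.univ.filter fun t => f t = some i).card

/-- `ET T k w` is the expected maximum load when products with weights `w 0, …, w (k-1)`
are statically offered to `T` customers making independent MNL choices; the loads form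
a multinomial random vector. -/
noncomputable def ET (T k : ℕ) (w : Fin k → ℝ) : ℝ :=
  ∑ f : Fin T → Option (Fin k),
    (∏ t, mnlProb w (f t)) * ((Finset.univ.sup (loadCount f) : ℕ) : ℝ)

section ProductPushforward

variable {ι α β R : Type*} [Fintype ι] [DecidableEq ι] [Fintype α] [DecidableEq β]
  [CommSemiring R]

theorem sum_prod_filter_comp_eq (π : α → β) (p : α → R) (g : ι → β) :
    ∑ f : ι → α with π ∘ f = g, ∏ t, p (f t) = ∏ t, ∑ x with π x = g t, p x := by
  rw [Finset.prod_univ_sum]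
  congr 1
  ext f
  simp [funext_iff, Fintype.mem_piFinset]

theorem sum_prod_mul_comp_eq [Fintype β] (π : α → β) (p : α → R) (q : β → R)
    (hq : ∀ y, ∑ x with π x = y, p x = q y) (F : (ι → β) → R) :
    ∑ f : ι → α, (∏ t, p (f t)) * F (π ∘ f) = ∑ g : ι → β, (∏ t, q (g t)) * F g := by
  rw [← Finset.sum_fiberwise _ (fun f => π ∘ f)]
  refine Finset.sum_congr rfl fun g _ => ?_
  calc ∑ f : ι → α with π ∘ f = g, (∏ t, p (f t)) * F (π ∘ f)
      = (∑ f : ι → α with π ∘ f = g, ∏ t, p (f t)) * F g := by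
        rw [Finset.sum_mul]
        exact Finset.sum_congr rfl fun f hf => by rw [(Finset.mem_filter.1 hf).2]
    _ = (∏ t, q (g t)) * F g := by simp only [sum_prod_filter_comp_eq, hq]

end ProductPushforward

section Merging

variable {k m : ℕ}

theorem sum_mnlProb_fiber (σ : Fin k → Fin m) (w : Fin k → ℝ) (y : Option (Fin m)) :
    ∑ x with Option.map σ x = y, mnlProb w x = mnlProb (fun j => ∑ i with σ i = j, w i) y := by
  have hsum : ∑ j, ∑ i with σ i = j, w i = ∑ i, w i := Finset.sum_fiberwise _ σ w
  rw [Finset.sum_filter, Fintype.sum_option]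
  cases y with
  | none => simp [mnlProb, hsum]
  | some j =>
    simp only [mnlProb]
    rw [hsum, Finset.sum_filter, Finset.sum_div]
    simp [ite_div]

theorem mnlProb_nonneg {w : Fin k → ℝ} (hw : ∀ i, 0 ≤ w i) (x : Option (Fin k)) :
    0 ≤ mnlProb w x := by
  have hden : 0 < 1 + ∑ j, w j :=
    add_pos_of_pos_of_nonneg one_pos (Finset.sum_nonneg fun j _ => hw j)
  cases x with
  | none => exact div_nonneg zero_le_one hden.le
  | some i => exact div_nonneg (hw i) hden.le

theorem loadCount_le_loadCount_map {T : ℕ} (σ : Fin k → Fin m) (f : Fin T → Option (Fin k))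
    (i : Fin k) : loadCount f i ≤ loadCount (Option.map σ ∘ f) (σ i) :=
  Finset.card_le_card fun t ht => by simp_all

theorem sup_loadCount_le_sup_loadCount_map {T : ℕ} (σ : Fin k → Fin m)
    (f : Fin T → Option (Fin k)) :
    univ.sup (loadCount f) ≤ univ.sup (loadCount (Option.map σ ∘ f)) :=
  Finset.sup_le fun i _ =>
    (loadCount_le_loadCount_map σ f i).trans (Finset.le_sup (Finset.mem_univ _))

theorem ET_le_ET_merge (T : ℕ) (σ : Fin k → Fin m) {w : Fin k → ℝ} (hw : ∀ i, 0 ≤ w i) :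
    ET T k w ≤ ET T m (fun j => ∑ i with σ i = j, w i) := by
  rw [ET, ET, ← sum_prod_mul_comp_eq (Option.map σ) (mnlProb w) _ (sum_mnlProb_fiber σ w)]
  refine Finset.sum_le_sum fun f _ => mul_le_mul_of_nonneg_left ?_ ?_
  · exact_mod_cast sup_loadCount_le_sup_loadCount_map σ f
  · exact Finset.prod_nonneg fun t _ => mnlProb_nonneg hw (f t)

end Merging

def mergeFirstTwo {k : ℕ} : Fin (k + 2) → Fin (k + 1) :=
  Fin.cases 0 (Fin.cases 0 Fin.succ)

theorem cons_add_eq_sum_fiber_mergeFirstTwo {k : ℕ} (w : Fin (k + 2) → ℝ) :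
    (Fin.cons (w 0 + w 1) fun i : Fin k => w i.succ.succ) =
      fun j => ∑ i with mergeFirstTwo i = j, w i := by
  funext j
  rw [Finset.sum_filter, Fin.sum_univ_succ, Fin.sum_univ_succ]
  simp only [mergeFirstTwo, Fin.cases_zero, Fin.cases_succ]
  cases j using Fin.cases <;> simp [Fin.succ_ne_zero, eq_comm]

theorem merge_does_not_decrease_expected_max_load
    (T k : ℕ) (w : Fin (k + 2) → ℝ) (hw : ∀ i, 0 < w i) :
    ET T (k + 1) (Fin.cons (w 0 + w 1) fun i : Fin k => w i.succ.succ) ≥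
      ET T (k + 2) w := by
  rw [cons_add_eq_sum_fiber_mergeFirstTwo]
  exact ET_le_ET_merge T mergeFirstTwo fun i => (hw i).le
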